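/- Lemma 5.7: Let n ≥ 1, let B_n = {x^n ≈ x^{n+1}, x^n y ≈ y x^n, x²y ≈ xyx}, and let θ_X, θ_Y be fully invariant congruences on F = FreeMonoid ℕ with θ(B_n) ⊆ θ_X and θ(B_n) ⊆ θ_Y (the corresponding varieties X and Y are subvarieties of P_n). If (x^k y^ℓ, y^ℓ x^k) ∈ θ_X ⊔ θ_Y for some 1 ≤ k, ℓ < n (the meet X ∧ Y satisfies x^k y^ℓ ≈ y^ℓ x^k), then (x^k y^ℓ, y^ℓ x^k) ∈ θ_X or (x^k y^ℓ, y^ℓ x^k) ∈ θ_Y. -/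

import Mathlib

/-! Common definitions: words, fully invariant congruences, identities and
named varieties from the paper. -/

/-- The free monoid over the countably infinite alphabet `ℕ`. -/
abbrev FM : Type := FreeMonoid ℕ

/-- The letters `x, y, z, s, t, h` (pairwise distinct elements of `ℕ`). -/
def xL : FM := FreeMonoid.of 0
def yL : FM := FreeMonoid.of 1
def zL : FM := FreeMonoid.of 2
def sL : FM := FreeMonoid.of 3
def tL : FM := FreeMonoid.of 4
def hL : FM := FreeMonoid.of 5
/-- The indexed letters `z_i` and `t_i` (0-based; pairwise distinct, and distinct
from the named letters above). -/
def zV (i : ℕ) : FM := FreeMonoid.of (10 + 2 * i)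
def tV (i : ℕ) : FM := FreeMonoid.of (11 + 2 * i)

/-- A congruence on the free monoid is fully invariant if it is stable under all
monoid endomorphisms. -/
def IsFullyInvariant (θ : Con FM) : Prop :=
  ∀ (σ : FM →* FM) (u v : FM), θ u v → θ (σ u) (σ v)

/-- The smallest fully invariant congruence on `FM` containing a set of identities. -/
def fiCon (E : Set (FM × FM)) : Con FM :=
  sInf {c : Con FM | IsFullyInvariant c ∧ ∀ p ∈ E, c p.1 p.2}

/-- Two congruences (relations) permute: `α ∘ β = β ∘ α`. -/
def Permute (α β : Con FM) : Prop :=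
  Relation.Comp (⇑α) (⇑β) = Relation.Comp (⇑β) (⇑α)

/-- A monoid `M` satisfies the identity `p.1 ≈ p.2`. -/
def MSatisfies (M : Type*) [Monoid M] (p : FM × FM) : Prop :=
  ∀ φ : FM →* M, φ p.1 = φ p.2

/-- A monoid `M` satisfies all identities of a congruence `θ`. -/
def SatisfiesAll (θ : Con FM) (M : Type*) [Monoid M] : Prop :=
  ∀ u v : FM, θ u v → MSatisfies M (u, v)

/-- Every element of the monoid `M` has a two-sided inverse, i.e. `M` is a group. -/
def IsGroupMonoid (M : Type*) [Monoid M] : Prop :=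
  ∀ m : M, ∃ m' : M, m * m' = 1 ∧ m' * m = 1

/-- The dual of a congruence: `θ^δ = {(rev u, rev v) : (u, v) ∈ θ}`. -/
def dualCon (θ : Con FM) : Con FM where
  r a b := θ a.reverse b.reverse
  iseqv := ⟨fun _ => θ.refl _, fun h => θ.symm h, fun h h' => θ.trans h h'⟩
  mul' := fun {a b c d} h₁ h₂ => by
    show θ (a * c).reverse (b * d).reverse
    rw [FreeMonoid.reverse_mul, FreeMonoid.reverse_mul]
    exact θ.mul h₂ h₁

/-- σ1 : `xysxty ≈ yxsxty`. -/
def idσ1 : FM × FM := (xL*yL*sL*xL*tL*yL, yL*xL*sL*xL*tL*yL)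
/-- σ2 : `xsytxy ≈ xsytyx`. -/
def idσ2 : FM × FM := (xL*sL*yL*tL*xL*yL, xL*sL*yL*tL*yL*xL)
/-- σ3 : `xsxyty ≈ xsyxty`. -/
def idσ3 : FM × FM := (xL*sL*xL*yL*tL*yL, xL*sL*yL*xL*tL*yL)
/-- α1 : `xysxtxhy ≈ yxsxtxhy`. -/
def idα1 : FM × FM := (xL*yL*sL*xL*tL*xL*hL*yL, yL*xL*sL*xL*tL*xL*hL*yL)
/-- α2 : `xysxtyhx ≈ yxsxtyhx`. -/
def idα2 : FM × FM := (xL*yL*sL*xL*tL*yL*hL*xL, yL*xL*sL*xL*tL*yL*hL*xL)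
/-- α3 : `xysytxhx ≈ yxsytxhx`. -/
def idα3 : FM × FM := (xL*yL*sL*yL*tL*xL*hL*xL, yL*xL*sL*yL*tL*xL*hL*xL)

/-- `aIdent i` is the identity `α_i` for `i ∈ {1, 2, 3}`. -/
def aIdent (i : ℕ) : FM × FM := if i = 1 then idα1 else if i = 2 then idα2 else idα3
/-- `bIdent i` is `β_i`, obtained from `α_i` by reversing both sides. -/
def bIdent (i : ℕ) : FM × FM := ((aIdent i).1.reverse, (aIdent i).2.reverse)

/-- The ordered product `f 0 * f 1 * ⋯ * f (n-1)`. -/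
def prodRange (n : ℕ) (f : ℕ → FM) : FM := ((List.range n).map f).prod
/-- The ordered product `f 0 * f 1 * ⋯ * f (n-1)` over `Fin n`. -/
def prodFin (n : ℕ) (f : Fin n → FM) : FM := ((List.finRange n).map f).prod

/-- The word `w_n[π,τ]` (0-based indices). -/
def wWord (n : ℕ) (π τ : Equiv.Perm (Fin n)) : FM :=
  prodRange n (fun i => zV i * tV i) * xL *
    prodFin n (fun i => zV (π i) * zV (n + τ i)) * xL *
    prodRange n (fun i => tV (n + i) * zV (n + i))

/-- The word `w_n'[π,τ]`. -/
def wWord' (n : ℕ) (π τ : Equiv.Perm (Fin n)) : FM :=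
  prodRange n (fun i => zV i * tV i) * (xL * xL) *
    prodFin n (fun i => zV (π i) * zV (n + τ i)) *
    prodRange n (fun i => tV (n + i) * zV (n + i))

/-- The word `c_{n,m}[ρ]`. -/
def cWord (n m : ℕ) (ρ : Equiv.Perm (Fin (n + m))) : FM :=
  prodRange n (fun i => zV i * tV i) * (xL * yL) * tL *
    prodRange m (fun i => zV (n + i) * tV (n + i)) * xL *
    prodFin (n + m) (fun i => zV (ρ i)) * yL

/-- The word `c'_{n,m}[ρ]`. -/
def cWord' (n m : ℕ) (ρ : Equiv.Perm (Fin (n + m))) : FM :=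
  prodRange n (fun i => zV i * tV i) * (yL * xL) * tL *
    prodRange m (fun i => zV (n + i) * tV (n + i)) * xL *
    prodFin (n + m) (fun i => zV (ρ i)) * yL

/-- The word `c_{n,m,k}[ρ]`. -/
def cWord3 (n m k : ℕ) (ρ : Equiv.Perm (Fin (n + m + k))) : FM :=
  prodRange n (fun i => zV i * tV i) * (xL * yL) * tL *
    prodRange m (fun i => zV (n + i) * tV (n + i)) * xL *
    prodFin (n + m + k) (fun i => zV (ρ i)) * yL *
    prodRange k (fun i => tV (n + m + i) * zV (n + m + i))

/-- The word `c'_{n,m,k}[ρ]`. -/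
def cWord3' (n m k : ℕ) (ρ : Equiv.Perm (Fin (n + m + k))) : FM :=
  prodRange n (fun i => zV i * tV i) * (yL * xL) * tL *
    prodRange m (fun i => zV (n + i) * tV (n + i)) * xL *
    prodFin (n + m + k) (fun i => zV (ρ i)) * yL *
    prodRange k (fun i => tV (n + m + i) * zV (n + m + i))

/-- The equational theory of `D_∞`. -/
def θDinf : Con FM :=
  fiCon {(xL^2, xL^3), (xL^2 * yL, yL * xL^2), idσ1, idσ2, idσ3}
/-- The equational theory of `N`. -/
def θN : Con FM :=
  fiCon {(xL^2, xL^3), (xL^2 * yL, yL * xL^2), (xL*yL*xL*zL*xL, xL^2*yL*zL), idσ2, idσ3}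
/-- The equational theory of `K`. -/
def θK : Con FM :=
  fiCon {(xL^2*yL, xL^2*yL*xL), (xL*yL*xL, xL*yL*xL^2), (xL^2*yL^2, yL^2*xL^2)}
/-- The identity basis of `P_n`. -/
def basisP (n : ℕ) : Set (FM × FM) :=
  {(xL^n, xL^(n+1)), (xL^n * yL, yL * xL^n), (xL^2*yL, xL*yL*xL)}
/-- The equational theory of `P_n`. -/
def θP (n : ℕ) : Con FM := fiCon (basisP n)
/-- The equational theory of `R`. -/
def θR : Con FM :=
  fiCon ({(xL^2, xL^3), (xL^2*yL, yL*xL^2), idσ1, idσ2} ∪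
    {p : FM × FM | ∃ (n : ℕ) (π τ : Equiv.Perm (Fin n)),
        1 ≤ n ∧ p = (wWord n π τ, wWord' n π τ)})
/-- The equational theory of `Q_{r,s}`. -/
def θQ (r s : ℕ) : Con FM :=
  fiCon ({(xL^2, xL^3), (xL^2*yL, yL*xL^2), idσ3} ∪
    {p : FM × FM | ∃ i : ℕ, (i = 1 ∨ i = 2 ∨ i = 3) ∧ i ≠ r ∧ p = aIdent i} ∪
    {p : FM × FM | ∃ j : ℕ, (j = 1 ∨ j = 2 ∨ j = 3) ∧ j ≠ s ∧ p = bIdent j} ∪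
    {p : FM × FM | ∃ (n m : ℕ) (ρ : Equiv.Perm (Fin (n + m))),
        p = (cWord n m ρ, cWord' n m ρ) ∨
        p = ((cWord n m ρ).reverse, (cWord' n m ρ).reverse)})
/-- The equational theory of the variety `SL` of semilattice monoids. -/
def θSL : Con FM := fiCon {(xL, xL^2), (xL*yL, yL*xL)}

/-- `u` is a factor (contiguous subword) of `w`. -/
def IsFactor (u w : FM) : Prop := ∃ p q : FM, p * u * q = w

lemma isFactor_left {a b w : FM} (h : IsFactor (a * b) w) : IsFactor a w := by
  obtain ⟨p, q, hpq⟩ := h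
  exact ⟨p, b * q, by rw [← hpq]; simp [mul_assoc]⟩

lemma isFactor_right {a b w : FM} (h : IsFactor (a * b) w) : IsFactor b w := by
  obtain ⟨p, q, hpq⟩ := h
  exact ⟨p * a, q, by rw [← hpq]; simp [mul_assoc]⟩

/-- The Rees congruence associated with the ideal of non-factors of `w`. -/
def reesCon (w : FM) : Con FM where
  r u v := u = v ∨ (¬ IsFactor u w ∧ ¬ IsFactor v w)
  iseqv := by
    refine ⟨fun _ => Or.inl rfl, ?_, ?_⟩
    · intro a b h
      rcases h with rfl | ⟨h1, h2⟩
      · exact Or.inl rfl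
      · exact Or.inr ⟨h2, h1⟩
    · intro a b c h h'
      rcases h with rfl | ⟨h1, h2⟩
      · exact h'
      · rcases h' with rfl | ⟨h3, h4⟩
        · exact Or.inr ⟨h1, h2⟩
        · exact Or.inr ⟨h1, h4⟩
  mul' := by
    rintro a b c d (rfl | ⟨h1, h2⟩) (rfl | ⟨h3, h4⟩)
    · exact Or.inl rfl
    · exact Or.inr ⟨fun h => h3 (isFactor_right h), fun h => h4 (isFactor_right h)⟩
    · exact Or.inr ⟨fun h => h1 (isFactor_left h), fun h => h2 (isFactor_left h)⟩
    · exact Or.inr ⟨fun h => h1 (isFactor_left h), fun h => h2 (isFactor_left h)⟩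

/-- The Rees quotient monoid `S(w)`. -/
abbrev SMon (w : FM) : Type := (reesCon w).Quotient

/-- The number of occurrences of the letter `a` in the word `w`. -/
def occ (w : FM) (a : ℕ) : ℕ := (FreeMonoid.toList w).count a

/-- A word in which every letter occurs at most once. -/
def LinearW (w : FM) : Prop := ∀ a : ℕ, occ w a ≤ 1

/-- Assemble the word `b0 * t_1 * b_1 * ⋯ * t_m * b_m` from a first block and a list
of (simple letter, block) pairs. -/
def assemble (b0 : FM) (rest : List (ℕ × FM)) : FM :=
  b0 * (rest.map (fun p => FreeMonoid.of p.1 * p.2)).prod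

/-- `(b0, rest)` is the decomposition of `w` into alternating simple letters and blocks
consisting of multiple letters. -/
def IsDecomposition (w : FM) (b0 : FM) (rest : List (ℕ × FM)) : Prop :=
  w = assemble b0 rest ∧
  (∀ p ∈ rest, occ w p.1 = 1) ∧
  (∀ a ∈ FreeMonoid.toList b0, 2 ≤ occ w a) ∧
  (∀ p ∈ rest, ∀ a ∈ FreeMonoid.toList p.2, 2 ≤ occ w a)

/-- The identity `u ≈ v` is linear-balanced. -/
def LinearBalanced (u v : FM) : Prop :=
  ∃ (b0 c0 : FM) (urest vrest : List (ℕ × FM)),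
    IsDecomposition u b0 urest ∧ IsDecomposition v c0 vrest ∧
    urest.map Prod.fst = vrest.map Prod.fst ∧
    ∀ a : ℕ, (2 ≤ occ u a ∨ 2 ≤ occ v a) →
      occ b0 a = occ c0 a ∧ occ b0 a ≤ 1 ∧
      ∀ q ∈ urest.zip vrest, occ q.1.2 a = occ q.2.2 a ∧ occ q.1.2 a ≤ 1

/-- `w` is an isoterm for `θ`. -/
def IsIsoterm (θ : Con FM) (w : FM) : Prop := ∀ w' : FM, θ w w' → w' = w

/-!
Both theories lie below the congruence `commCon k l` of words with equal `commSig k l`, and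
this congruence separates `x^k y^l` from `y^l x^k`; so the join cannot identify them either.
The signature records the numbers of `x` and `y` truncated at `max k l + 1` and, when these
lie in `[1, k] × [1, l]`, which of `x`, `y` comes first. A fully invariant `θ ⊇ θ(B_n)` that
fails `x^k y^l ≈ y^l x^k` preserves it. If `θ` changed a truncated count, erasing the other
letters gives `x^A ≈ x^B` with `A < B`, `A ≤ max k l`; periodicity and `x^n ≈ x^(n+1)` then make
`x^k` (or `y^l`) equivalent to the central `x^n` (or `y^n`). If it changed the first letter,
erasing all letters but `x, y` and sorting by `x²y ≈ xyx` gives `x^A y^B ≈ y^B x^A` with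
`1 ≤ A ≤ k`, `1 ≤ B ≤ l`, and `x²y ≈ xyx` again raises the exponents to `k` and `l`.
-/

open FreeMonoid

lemma occ_mul (u v : FM) (a : ℕ) : occ (u * v) a = occ u a + occ v a := by
  simp only [occ, toList_mul, List.count_append]

lemma occ_of_pow (b m a : ℕ) : occ (of b ^ m) a = if b = a then m else 0 := by
  induction m with
  | zero => simp [occ]
  | succ m ih =>
    rw [pow_succ, occ_mul, ih]
    by_cases hb : b = a <;> simp [occ, hb]

lemma lift_ite_eq_pow_occ (a : ℕ) (c w : FM) :
    lift (fun b => if b = a then c else 1) w = c ^ occ w a := by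
  induction w using FreeMonoid.recOn with
  | one => rfl
  | of_mul b w ih =>
    rw [map_mul, ih, lift_eval_of, occ_mul]
    by_cases hb : b = a <;> simp [occ, hb, pow_add]

lemma IsFullyInvariant.rel_pow_occ {θ : Con FM} (hfi : IsFullyInvariant θ) {u v : FM}
    (huv : θ u v) (a : ℕ) (c : FM) : θ (c ^ occ u a) (c ^ occ v a) := by
  simpa only [lift_ite_eq_pow_occ] using hfi (lift fun b => if b = a then c else 1) u v huv

-- `x` and `y` are the letters `0` and `1`.
def firstXY (w : FM) : Option ℕ := w.toList.find? (· ≤ 1)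

lemma firstXY_mul (u v : FM) : firstXY (u * v) = (firstXY u).or (firstXY v) :=
  List.find?_append

lemma firstXY_of_mul (b : ℕ) (w : FM) :
    firstXY (of b * w) = if b ≤ 1 then some b else firstXY w := by
  by_cases hb : b ≤ 1 <;> simp [firstXY, hb]

lemma le_one_and_occ_pos_of_firstXY_eq_some {w : FM} {c : ℕ} (h : firstXY w = some c) :
    c ≤ 1 ∧ 0 < occ w c :=
  ⟨by simpa using List.find?_some h, List.count_pos_iff.2 (List.mem_of_find?_eq_some h)⟩

lemma firstXY_eq_none {w : FM} (h0 : occ w 0 = 0) (h1 : occ w 1 = 0) : firstXY w = none := by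
  refine List.find?_eq_none.2 fun c hc hc1 => ?_
  have hpos : 0 < occ w c := List.count_pos_iff.2 hc
  have : c ≤ 1 := by simpa using hc1
  interval_cases c <;> omega

lemma firstXY_isSome {w : FM} (h : 0 < occ w 0 ∨ 0 < occ w 1) : (firstXY w).isSome := by
  refine List.find?_isSome.2 ?_
  rcases h with h | h
  exacts [⟨0, List.count_pos_iff.1 h, by simp⟩, ⟨1, List.count_pos_iff.1 h, by simp⟩]

lemma firstXY_eq_some {w : FM} {c d : ℕ} (hcd : c + d = 1) (hc : 0 < occ w c)
    (hd : occ w d = 0) : firstXY w = some c := by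
  have hc1 : c ≤ 1 := by omega
  obtain ⟨e, he⟩ := Option.isSome_iff_exists.1
    (firstXY_isSome (w := w) (by interval_cases c <;> simp_all))
  obtain ⟨he1, hepos⟩ := le_one_and_occ_pos_of_firstXY_eq_some he
  have : e = c := by interval_cases c <;> interval_cases e <;> simp_all
  rw [he, this]

lemma firstXY_eq_of_occ_eq {u v : FM} (h0 : occ u 0 = occ v 0) (h1 : occ u 1 = occ v 1)
    (h : 0 < occ u 0 → 0 < occ u 1 → firstXY u = firstXY v) : firstXY u = firstXY v := by
  rcases Nat.eq_zero_or_pos (occ u 0) with hu0 | hu0 <;>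
    rcases Nat.eq_zero_or_pos (occ u 1) with hu1 | hu1
  · rw [firstXY_eq_none hu0 hu1, firstXY_eq_none (by omega) (by omega)]
  · rw [firstXY_eq_some (d := 0) rfl hu1 hu0, firstXY_eq_some (d := 0) rfl (by omega) (by omega)]
  · rw [firstXY_eq_some (d := 1) rfl hu0 hu1, firstXY_eq_some (d := 1) rfl (by omega) (by omega)]
  · exact h hu0 hu1

section Pn

variable (n : ℕ)

lemma thetaP_map (σ : FM →* FM) {u v : FM} (h : θP n u v) : θP n (σ u) (σ v) :=
  fun ρ hρ => hρ.1 σ u v (h ρ hρ)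

lemma thetaP_of_mem_basisP {p : FM × FM} (hp : p ∈ basisP n) : θP n p.1 p.2 :=
  fun _ hc => hc.2 p hp

lemma thetaP_pow_succ (c : FM) : θP n (c ^ n) (c ^ (n + 1)) := by
  have h := thetaP_map n (lift fun _ => c)
    (thetaP_of_mem_basisP n (p := (xL ^ n, xL ^ (n + 1))) (by simp [basisP]))
  simp only [map_pow] at h
  exact h

lemma thetaP_pow_mul_comm (c w : FM) : θP n (c ^ n * w) (w * c ^ n) := by
  have h := thetaP_map n (lift fun a => if a = 0 then c else w)
    (thetaP_of_mem_basisP n (p := (xL ^ n * yL, yL * xL ^ n)) (by simp [basisP]))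
  simp only [map_mul, map_pow] at h
  exact h

lemma thetaP_sq_mul (c w : FM) : θP n (c ^ 2 * w) (c * w * c) := by
  have h := thetaP_map n (lift fun a => if a = 0 then c else w)
    (thetaP_of_mem_basisP n (p := (xL ^ 2 * yL, xL * yL * xL)) (by simp [basisP]))
  simp only [map_mul, map_pow] at h
  exact h

lemma thetaP_pow_add (c : FM) (j : ℕ) : θP n (c ^ n) (c ^ (n + j)) := by
  induction j with
  | zero => exact (θP n).refl _
  | succ j ih =>
    have h := (θP n).mul (thetaP_pow_succ n c) ((θP n).refl (c ^ j))
    rw [← pow_add, ← pow_add, add_right_comm] at h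
    exact (θP n).trans ih h

lemma thetaP_mul_mul_pow (c w : FM) (A : ℕ) : θP n (c * w * c ^ A) (c ^ (A + 1) * w) := by
  induction A with
  | zero => simpa using (θP n).refl (c * w)
  | succ A ih =>
    have h2 := thetaP_sq_mul n c (c ^ A * w)
    rw [← mul_assoc, ← mul_assoc, ← pow_succ', ← pow_add, show 2 + A = A + 1 + 1 by omega] at h2
    rw [pow_succ, ← mul_assoc]
    exact (θP n).trans ((θP n).mul ih ((θP n).refl c)) ((θP n).symm h2)

end Pn

lemma Con.rel_pow_add_mul (θ : Con FM) {c : FM} {A d : ℕ} (h : θ (c ^ A) (c ^ (A + d)))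
    (m : ℕ) : θ (c ^ A) (c ^ (A + m * d)) := by
  induction m with
  | zero => simpa using θ.refl (c ^ A)
  | succ m ih =>
    have h' := θ.mul h (θ.refl (c ^ (m * d)))
    rw [← pow_add, ← pow_add, show A + d + m * d = A + (m + 1) * d by ring] at h'
    exact θ.trans ih h'

section AboveP

variable {n : ℕ} {θ : Con FM}

lemma rel_pow_n_of_rel_pow_lt (hP : θP n ≤ θ) {c : FM} {A B m : ℕ} (h : θ (c ^ A) (c ^ B))
    (hAB : A < B) (hAm : A ≤ m) : θ (c ^ m) (c ^ n) := by
  have hAn : θ (c ^ A) (c ^ n) := by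
    have hchain := θ.rel_pow_add_mul (d := B - A) (by rwa [Nat.add_sub_cancel' hAB.le]) n
    have hn := hP (thetaP_pow_add n c (A + n * (B - A) - n))
    rw [Nat.add_sub_cancel' (le_add_left (Nat.le_mul_of_pos_right n (Nat.sub_pos_of_lt hAB)))] at hn
    exact θ.trans hchain (θ.symm hn)
  have h' := θ.mul (θ.refl (c ^ (m - A))) hAn
  rw [← pow_add, ← pow_add, Nat.sub_add_cancel hAm, add_comm] at h'
  exact θ.trans h' (θ.symm (hP (thetaP_pow_add n c (m - A))))

lemma pow_mul_comm_of_rel_pow_n (hP : θP n ≤ θ) {c : FM} {m : ℕ} (h : θ (c ^ m) (c ^ n))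
    (w : FM) : θ (c ^ m * w) (w * c ^ m) :=
  θ.trans (θ.mul h (θ.refl w))
    (θ.trans (hP (thetaP_pow_mul_comm n c w)) (θ.mul (θ.refl w) (θ.symm h)))

lemma pow_mul_comm_succ (hP : θP n ≤ θ) {c w : FM} {A : ℕ} (hA : 1 ≤ A)
    (h : θ (c ^ A * w) (w * c ^ A)) : θ (c ^ (A + 1) * w) (w * c ^ (A + 1)) := by
  obtain ⟨B, rfl⟩ := Nat.exists_eq_add_of_le' hA
  have hsq := hP (thetaP_sq_mul n c (c ^ B * w))
  rw [← mul_assoc, ← mul_assoc, ← pow_succ', ← pow_add, show 2 + B = B + 1 + 1 by omega] at hsq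
  have h' := θ.mul h (θ.refl c)
  rw [mul_assoc w, ← pow_succ] at h'
  exact θ.trans hsq h'

lemma pow_mul_comm_of_le (hP : θP n ≤ θ) {c w : FM} {A m : ℕ} (hA : 1 ≤ A) (hAm : A ≤ m)
    (h : θ (c ^ A * w) (w * c ^ A)) : θ (c ^ m * w) (w * c ^ m) := by
  induction m, hAm using Nat.le_induction with
  | base => exact h
  | succ m hm ih => exact pow_mul_comm_succ hP (hA.trans hm) ih

end AboveP

def projXY : FM →* FM := lift fun a => if a ≤ 1 then of a else 1

def nfXY (w : FM) : FM :=
  if firstXY w = some 1 then yL ^ occ w 1 * xL ^ occ w 0 else xL ^ occ w 0 * yL ^ occ w 1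

lemma thetaP_projXY_nfXY (n : ℕ) (w : FM) : θP n (projXY w) (nfXY w) := by
  induction w using FreeMonoid.recOn with
  | one => simpa [nfXY, firstXY, occ] using (θP n).refl 1
  | of_mul b w ih =>
    have hw := (θP n).mul ((θP n).refl (projXY (of b))) ih
    rw [← map_mul] at hw
    refine (θP n).trans hw ?_
    by_cases hb : b ≤ 1
    · interval_cases b
      · have hnf : nfXY (of 0 * w) = xL ^ (occ w 0 + 1) * yL ^ occ w 1 := by
          simp [nfXY, firstXY_of_mul, occ]
        rw [hnf, show projXY (of 0) = xL from rfl, nfXY]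
        split_ifs
        · rw [← mul_assoc]; exact thetaP_mul_mul_pow n xL _ _
        · rw [← mul_assoc, ← pow_succ']; exact (θP n).refl _
      · have hnf : nfXY (of 1 * w) = yL ^ (occ w 1 + 1) * xL ^ occ w 0 := by
          simp [nfXY, firstXY_of_mul, occ]
        rw [hnf, show projXY (of 1) = yL from rfl, nfXY]
        split_ifs
        · rw [← mul_assoc, ← pow_succ']; exact (θP n).refl _
        · rw [← mul_assoc]; exact thetaP_mul_mul_pow n yL _ _
    · have hnf : nfXY (of b * w) = nfXY w := by
        simp [nfXY, firstXY_of_mul, hb, occ, show b ≠ 0 by omega,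
          show b ≠ 1 by omega]
      rw [hnf, show projXY (of b) = 1 by simp [projXY, hb], one_mul]
      exact (θP n).refl _

section Signature

variable {k l : ℕ}

def commSig (k l : ℕ) (w : FM) : ℕ × ℕ × Option ℕ :=
  (min (occ w 0) (max k l + 1), min (occ w 1) (max k l + 1),
    if 1 ≤ occ w 0 ∧ occ w 0 ≤ k ∧ 1 ≤ occ w 1 ∧ occ w 1 ≤ l then firstXY w else none)

lemma commSig_mul {a b c d : FM} (hab : commSig k l a = commSig k l b)
    (hcd : commSig k l c = commSig k l d) : commSig k l (a * c) = commSig k l (b * d) := by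
  simp only [commSig, Prod.mk.injEq, occ_mul] at hab hcd ⊢
  obtain ⟨ha0, ha1, haf⟩ := hab
  obtain ⟨hc0, hc1, hcf⟩ := hcd
  refine ⟨by omega, by omega, ?_⟩
  by_cases hbox : 1 ≤ occ a 0 + occ c 0 ∧ occ a 0 + occ c 0 ≤ k ∧
      1 ≤ occ a 1 + occ c 1 ∧ occ a 1 + occ c 1 ≤ l
  · have hab : firstXY a = firstXY b := firstXY_eq_of_occ_eq (by omega) (by omega)
      fun _ _ => by rwa [if_pos (by omega), if_pos (by omega)] at haf
    have hcd : firstXY c = firstXY d := firstXY_eq_of_occ_eq (by omega) (by omega)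
      fun _ _ => by rwa [if_pos (by omega), if_pos (by omega)] at hcf
    rw [if_pos hbox, if_pos (by omega), firstXY_mul, firstXY_mul, hab, hcd]
  · rw [if_neg hbox, if_neg (by omega)]

def commCon (k l : ℕ) : Con FM where
  r u v := commSig k l u = commSig k l v
  iseqv := ⟨fun _ => rfl, Eq.symm, Eq.trans⟩
  mul' := commSig_mul

lemma not_commCon_comm (hk : 1 ≤ k) (hl : 1 ≤ l) :
    ¬ commCon k l (xL ^ k * yL ^ l) (yL ^ l * xL ^ k) := by
  intro h
  have hx0 : occ (xL ^ k) 0 = k := by simp [xL, occ_of_pow]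
  have hx1 : occ (xL ^ k) 1 = 0 := by simp [xL, occ_of_pow]
  have hy0 : occ (yL ^ l) 0 = 0 := by simp [yL, occ_of_pow]
  have hy1 : occ (yL ^ l) 1 = l := by simp [yL, occ_of_pow]
  have hfx : firstXY (xL ^ k) = some 0 := firstXY_eq_some (d := 1) rfl (by omega) hx1
  have hfy : firstXY (yL ^ l) = some 1 := firstXY_eq_some (d := 0) rfl (by omega) hy0
  have h3 := congrArg (fun s => s.2.2) h
  simp [commSig, occ_mul, hx0, hx1, hy0, hy1, firstXY_mul, hfx, hfy, hk, hl] at h3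

end Signature

section Commutation

variable {n k l : ℕ} {θ : Con FM}

lemma rel_comm_of_rel_comm_le (hP : θP n ≤ θ) {A B : ℕ} (hA : 1 ≤ A) (hAk : A ≤ k)
    (hB : 1 ≤ B) (hBl : B ≤ l) (h : θ (xL ^ A * yL ^ B) (yL ^ B * xL ^ A)) :
    θ (xL ^ k * yL ^ l) (yL ^ l * xL ^ k) :=
  θ.symm (pow_mul_comm_of_le hP hB hBl (θ.symm (pow_mul_comm_of_le hP hA hAk h)))

lemma rel_comm_of_occ_lt (hfi : IsFullyInvariant θ) (hP : θP n ≤ θ) {u v : FM} (huv : θ u v)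
    {a : ℕ} (hlt : occ u a < occ v a) (hle : occ u a ≤ max k l) :
    θ (xL ^ k * yL ^ l) (yL ^ l * xL ^ k) := by
  rcases le_max_iff.1 hle with hk | hl
  · exact pow_mul_comm_of_rel_pow_n hP
      (rel_pow_n_of_rel_pow_lt hP (hfi.rel_pow_occ huv a xL) hlt hk) _
  · exact θ.symm (pow_mul_comm_of_rel_pow_n hP
      (rel_pow_n_of_rel_pow_lt hP (hfi.rel_pow_occ huv a yL) hlt hl) _)

variable (hfi : IsFullyInvariant θ) (hP : θP n ≤ θ)
  (hnc : ¬ θ (xL ^ k * yL ^ l) (yL ^ l * xL ^ k))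
include hfi hP hnc

lemma min_occ_eq_of_not_rel_comm {u v : FM} (huv : θ u v) (a : ℕ) :
    min (occ u a) (max k l + 1) = min (occ v a) (max k l + 1) := by
  by_contra hne
  rcases Nat.lt_or_gt_of_ne (show occ u a ≠ occ v a by omega) with hlt | hlt
  · exact hnc (rel_comm_of_occ_lt hfi hP huv hlt (by omega))
  · exact hnc (rel_comm_of_occ_lt hfi hP (θ.symm huv) hlt (by omega))

lemma firstXY_eq_of_not_rel_comm {u v : FM} (huv : θ u v) (h0 : occ u 0 = occ v 0)
    (h1 : occ u 1 = occ v 1) (hbox : 1 ≤ occ u 0 ∧ occ u 0 ≤ k ∧ 1 ≤ occ u 1 ∧ occ u 1 ≤ l) :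
    firstXY u = firstXY v := by
  by_contra hne
  have hnf : θ (nfXY u) (nfXY v) :=
    θ.trans (θ.symm (hP (thetaP_projXY_nfXY n u)))
      (θ.trans (hfi projXY u v huv) (hP (thetaP_projXY_nfXY n v)))
  obtain ⟨cu, hcu⟩ := Option.isSome_iff_exists.1 (firstXY_isSome (w := u) (by omega))
  obtain ⟨cv, hcv⟩ := Option.isSome_iff_exists.1 (firstXY_isSome (w := v) (by omega))
  have hcu1 := (le_one_and_occ_pos_of_firstXY_eq_some hcu).1
  have hcv1 := (le_one_and_occ_pos_of_firstXY_eq_some hcv).1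
  rw [hcu, hcv] at hne
  obtain ⟨hb0, hb1, hb2, hb3⟩ := hbox
  interval_cases cu <;> interval_cases cv
  · exact hne rfl
  · simp only [nfXY, hcu, hcv, ← h0, ← h1, if_true] at hnf
    exact hnc (rel_comm_of_rel_comm_le hP hb0 hb1 hb2 hb3 hnf)
  · simp only [nfXY, hcu, hcv, ← h0, ← h1, if_true] at hnf
    exact hnc (rel_comm_of_rel_comm_le hP hb0 hb1 hb2 hb3 (θ.symm hnf))
  · exact hne rfl

lemma le_commCon_of_not_rel_comm : θ ≤ commCon k l := by
  intro u v huv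
  have h0 := min_occ_eq_of_not_rel_comm hfi hP hnc huv 0
  have h1 := min_occ_eq_of_not_rel_comm hfi hP hnc huv 1
  show commSig k l u = commSig k l v
  simp only [commSig, Prod.mk.injEq]
  refine ⟨h0, h1, ?_⟩
  by_cases hbox : 1 ≤ occ u 0 ∧ occ u 0 ≤ k ∧ 1 ≤ occ u 1 ∧ occ u 1 ≤ l
  · rw [if_pos hbox, if_pos (by omega)]
    exact firstXY_eq_of_not_rel_comm hfi hP hnc huv (by omega) (by omega) hbox
  · rw [if_neg hbox, if_neg (by omega)]

end Commutation

theorem lemma_5_7_general (n : ℕ) (θX θY : Con FM)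
    (hfiX : IsFullyInvariant θX) (hfiY : IsFullyInvariant θY)
    (hPX : θP n ≤ θX) (hPY : θP n ≤ θY)
    (k l : ℕ) (hk : 1 ≤ k) (hl : 1 ≤ l)
    (h : (θX ⊔ θY) (xL ^ k * yL ^ l) (yL ^ l * xL ^ k)) :
    θX (xL ^ k * yL ^ l) (yL ^ l * xL ^ k) ∨
      θY (xL ^ k * yL ^ l) (yL ^ l * xL ^ k) := by
  by_contra! hcon
  exact not_commCon_comm hk hl (sup_le (le_commCon_of_not_rel_comm hfiX hPX hcon.1)
    (le_commCon_of_not_rel_comm hfiY hPY hcon.2) h)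

/-- **Lemma 5.7.** If two subvarieties of `P_n` are such that their meet satisfies
`x^k y^ℓ ≈ y^ℓ x^k` with `1 ≤ k, ℓ < n`, then this identity holds in one of them. -/
theorem lemma_5_7 (n : ℕ) (hn : 1 ≤ n) (θX θY : Con FM)
    (hfiX : IsFullyInvariant θX) (hfiY : IsFullyInvariant θY)
    (hPX : θP n ≤ θX) (hPY : θP n ≤ θY)
    (k l : ℕ) (hk : 1 ≤ k) (hkn : k < n) (hl : 1 ≤ l) (hln : l < n)
    (h : (θX ⊔ θY) (xL ^ k * yL ^ l) (yL ^ l * xL ^ k)) :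
    θX (xL ^ k * yL ^ l) (yL ^ l * xL ^ k) ∨
      θY (xL ^ k * yL ^ l) (yL ^ l * xL ^ k) :=
  lemma_5_7_general n θX θY hfiX hfiY hPX hPY k l hk hl h
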